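/- arXiv:1405.6152 — 2 statements merged into one kernel-verified Lean document; each statement's English description precedes it below -/
import Mathlib

section
/- For each stratum V_i of a reduced complex analytic germ (X,0) ⊂ (C^n,0) and each integer e, the normalized local integral lim_{ε→0} (1/(b_{2e} ε^{2e})) · (1/s_{2n−2e−1}) ∫_{V_i ∩ B_ε} K_{2(d_i−e)}(x) dx exists and is finite; moreover this limit vanishes for e ∈ {0, ..., d_0 − 1} ∪ {d_i + 1, ..., n}, where d_0 = dim V_0 and d_i = dim V_i. -/
open Filter Topology

/- STATEMENT 10: For each stratum V_i of a reduced complex analytic germ (X,0) and each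
integer e, the normalized local curvature integral
I_i(e, ε) = (1/(b_{2e} ε^{2e} s_{2n−2e−1})) ∫_{V_i ∩ B_ε} K_{2(d_i−e)} has a finite
limit as ε → 0⁺, and this limit vanishes for e < d_0 or e > d_i. Assumed: the
decomposition of the normalized measures Λ_{2e}(closure(V_i), −) along the strata of
the closure, η(V_i, 1_{closure(V_i)}) = 1, and the existence/vanishing results for the
normalized Lipschitz–Killing limits of the closures (Dutertre). -/
theorem stmt_10 (q d0 : ℕ) (d : Fin (q + 1) → ℕ)   -- d i = dim_C V_i, d0 = dim_C V_0
    (cl : Fin (q + 1) → Finset (Fin (q + 1)))   -- strata contained in closure(V_i)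
    (hmem : ∀ i, i ∈ cl i)
    (htrans : ∀ i j, j ∈ cl i → cl j ⊆ cl i)
    (hantisymm : ∀ i j, j ∈ cl i → i ∈ cl j → i = j)
    (I : Fin (q + 1) → ℕ → ℝ → ℝ)
    -- I i e ε = (1/(b_{2e} ε^{2e} s_{2n−2e−1})) ∫_{V_i ∩ B_ε} K_{2(d_i−e)}
    (η : Fin (q + 1) → Fin (q + 1) → ℝ)   -- η j i = η(V_j, 1_{closure(V_i)})
    (hηself : ∀ i, η i i = 1)
    (Λ : Fin (q + 1) → ℕ → ℝ → ℝ)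
    -- Λ i e ε = Λ_{2e}(closure(V_i), closure(V_i) ∩ B_ε)/(b_{2e} ε^{2e})
    (hdecomp : ∀ i e, ∀ ε > (0 : ℝ), Λ i e ε = ∑ j ∈ cl i, η j i * I j e ε)
    (hIzero : ∀ i e, d i < e → ∀ ε, I i e ε = 0)   -- K_{2(d_i−e)} := 0 for e > d_i
    (hΛex : ∀ i e, ∃ ℓ : ℝ, Tendsto (Λ i e) (𝓝[>] (0 : ℝ)) (𝓝 ℓ))
    (hΛvan : ∀ i e, e < d0 → Tendsto (Λ i e) (𝓝[>] (0 : ℝ)) (𝓝 0)) :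
    ∀ i e, (∃ ℓ : ℝ, Tendsto (I i e) (𝓝[>] (0 : ℝ)) (𝓝 ℓ)) ∧
      ((e < d0 ∨ d i < e) → Tendsto (I i e) (𝓝[>] (0 : ℝ)) (𝓝 0)) := by
  have key : ∀ n : ℕ, ∀ i : Fin (q + 1), (cl i).card ≤ n → ∀ e,
      (∃ ℓ : ℝ, Tendsto (I i e) (𝓝[>] (0 : ℝ)) (𝓝 ℓ)) ∧
      ((e < d0 ∨ d i < e) → Tendsto (I i e) (𝓝[>] (0 : ℝ)) (𝓝 0)) := by
    intro n
    induction n with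
    | zero =>
      intro i hi
      exact absurd (Finset.card_pos.mpr ⟨i, hmem i⟩) (by omega)
    | succ n ih =>
      intro i hi e
      by_cases hde : d i < e
      · have h0 : Tendsto (I i e) (𝓝[>] (0 : ℝ)) (𝓝 0) := by
          have hfun : I i e = fun _ => 0 := funext (hIzero i e hde)
          rw [hfun]; exact tendsto_const_nhds
        exact ⟨⟨0, h0⟩, fun _ => h0⟩
      · have hsub : ∀ j ∈ (cl i).erase i, (cl j).card ≤ n := by
          intro j hj
          have hj' := Finset.mem_of_mem_erase hj
          have hji : j ≠ i := Finset.ne_of_mem_erase hj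
          have hni : i ∉ cl j := fun h => hji (hantisymm i j hj' h).symm
          have hss : cl j ⊂ cl i := ⟨htrans i j hj', fun h => hni (h (hmem i))⟩
          have := Finset.card_lt_card hss
          omega
        -- eventual equality: I i e ε = Λ i e ε - ∑ over erase
        have heq : ∀ ε > (0 : ℝ),
            I i e ε = Λ i e ε - ∑ j ∈ (cl i).erase i, η j i * I j e ε := by
          intro ε hε
          have h1 := hdecomp i e ε hε
          rw [← Finset.add_sum_erase _ _ (hmem i), hηself i, one_mul] at h1
          linarith
        have hev : (fun ε => Λ i e ε - ∑ j ∈ (cl i).erase i, η j i * I j e ε)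
            =ᶠ[𝓝[>] (0 : ℝ)] I i e := by
          filter_upwards [self_mem_nhdsWithin] with ε hε
          exact (heq ε hε).symm
        obtain ⟨ℓ, hℓ⟩ := hΛex i e
        classical
        set L : Fin (q + 1) → ℝ := fun j =>
          if h : ∃ ℓ : ℝ, Tendsto (I j e) (𝓝[>] (0 : ℝ)) (𝓝 ℓ) then h.choose else 0
          with hL
        have hLspec : ∀ j ∈ (cl i).erase i,
            Tendsto (I j e) (𝓝[>] (0 : ℝ)) (𝓝 (L j)) := by
          intro j hj
          have h := (ih j (hsub j hj) e).1
          simp only [hL, dif_pos h]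
          exact h.choose_spec
        have hsum : Tendsto (fun ε => ∑ j ∈ (cl i).erase i, η j i * I j e ε)
            (𝓝[>] (0 : ℝ)) (𝓝 (∑ j ∈ (cl i).erase i, η j i * L j)) :=
          tendsto_finset_sum _ (fun j hj => (hLspec j hj).const_mul _)
        refine ⟨⟨ℓ - ∑ j ∈ (cl i).erase i, η j i * L j, (hℓ.sub hsum).congr' hev⟩, ?_⟩
        rintro (he | he)
        · have hsum0 : Tendsto (fun ε => ∑ j ∈ (cl i).erase i, η j i * I j e ε)
              (𝓝[>] (0 : ℝ)) (𝓝 (∑ j ∈ (cl i).erase i, η j i * 0)) :=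
            tendsto_finset_sum _
              (fun j hj => ((ih j (hsub j hj) e).2 (Or.inl he)).const_mul _)
          simp only [mul_zero, Finset.sum_const_zero] at hsum0
          have := ((hΛvan i e he).sub hsum0).congr' hev
          simpa using this
        · exact absurd he hde
  intro i e
  exact key (cl i).card i le_rfl e
end

section
/- For each stratum V_i with i ≥ 1 of a reduced complex analytic germ (X,0), lim_{ε→0} (1/(b_{2d_0} ε^{2d_0})) · (1/s_{2n−2d_0−1}) ∫_{V_i ∩ B_ε} K_{2(d_i−d_0)}(x) dx = 0, while for the stratum V_0 containing 0 this limit equals 1 (with K_0 the Gauss–Bonnet integrand on V_0). -/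
open Filter Topology

/- STATEMENT 11: For each stratum V_i (i ≥ 1) of a reduced complex analytic germ (X,0),
lim_{ε→0} (1/(b_{2d_0} ε^{2d_0} s_{2n−2d_0−1})) ∫_{V_i ∩ B_ε} K_{2(d_i−d_0)} = 0,
while for V_0 (the stratum through 0, with K_0 the Gauss–Bonnet integrand) this limit
equals 1. Assumed: lim Λ_{2d_0}(closure(V_i), ∩B_ε)/(b_{2d_0} ε^{2d_0}) = η(V_0,
1_{closure(V_i)}), the curvature decomposition, closure(V_0) = V_0, and the existence
of the normalized limits. -/
theorem stmt_11 (q d0 : ℕ) (d : Fin (q + 1) → ℕ) (hd0 : d 0 = d0)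
    (cl : Fin (q + 1) → Finset (Fin (q + 1)))   -- strata contained in closure(V_i)
    (hmem : ∀ i, i ∈ cl i)
    (h0mem : ∀ i, (0 : Fin (q + 1)) ∈ cl i)   -- 0 lies in the closure of every stratum
    (htrans : ∀ i j, j ∈ cl i → cl j ⊆ cl i)
    (hantisymm : ∀ i j, j ∈ cl i → i ∈ cl j → i = j)
    (hcl0 : cl 0 = {0})   -- V_0 is closed
    (I : Fin (q + 1) → ℕ → ℝ → ℝ)
    -- I i e ε = (1/(b_{2e} ε^{2e} s_{2n−2e−1})) ∫_{V_i ∩ B_ε} K_{2(d_i−e)}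
    (η : Fin (q + 1) → Fin (q + 1) → ℝ)   -- η j i = η(V_j, 1_{closure(V_i)})
    (hηself : ∀ i, η i i = 1)
    (Λ : Fin (q + 1) → ℕ → ℝ → ℝ)
    -- Λ i e ε = Λ_{2e}(closure(V_i), closure(V_i) ∩ B_ε)/(b_{2e} ε^{2e})
    (hdecomp : ∀ i e, ∀ ε > (0 : ℝ), Λ i e ε = ∑ j ∈ cl i, η j i * I j e ε)
    (hIex : ∀ i e, ∃ ℓ : ℝ, Tendsto (I i e) (𝓝[>] (0 : ℝ)) (𝓝 ℓ))
    (hΛη : ∀ i, Tendsto (Λ i d0) (𝓝[>] (0 : ℝ)) (𝓝 (η 0 i))) :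
    Tendsto (I 0 d0) (𝓝[>] (0 : ℝ)) (𝓝 1) ∧
      ∀ i, i ≠ 0 → Tendsto (I i d0) (𝓝[>] (0 : ℝ)) (𝓝 0) := by
  choose L hL using fun i => hIex i d0
  have key : ∀ n i, (cl i).card ≤ n → L i = if i = 0 then 1 else 0 := by
    intro n
    induction n with
    | zero =>
      intro i h
      exact absurd (Finset.card_pos.mpr ⟨i, hmem i⟩) (by omega)
    | succ n ih =>
    intro i hn
    have hsum : Tendsto (fun ε => ∑ j ∈ cl i, η j i * I j d0 ε) (𝓝[>] (0 : ℝ))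
        (𝓝 (∑ j ∈ cl i, η j i * L j)) :=
      tendsto_finset_sum _ fun j _ => (hL j).const_mul _
    have heq : Tendsto (Λ i d0) (𝓝[>] (0 : ℝ)) (𝓝 (∑ j ∈ cl i, η j i * L j)) := by
      refine hsum.congr' ?_
      filter_upwards [self_mem_nhdsWithin] with ε hε
      exact (hdecomp i d0 ε hε).symm
    have huniq : η 0 i = ∑ j ∈ cl i, η j i * L j :=
      tendsto_nhds_unique (hΛη i) heq
    by_cases hi : i = 0
    · subst hi
      rw [hcl0, Finset.sum_singleton, hηself, one_mul] at huniq
      simp [← huniq, hηself]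
    · have hIH : ∀ j ∈ cl i, j ≠ i → L j = if j = 0 then 1 else 0 := by
        intro j hj hji
        refine ih j (Nat.lt_succ_iff.mp (lt_of_lt_of_le ?_ hn))
        refine Finset.card_lt_card ⟨htrans i j hj, fun hsub => ?_⟩
        exact hji (hantisymm i j hj (hsub (hmem i))).symm
      rw [← Finset.add_sum_erase _ _ (hmem i)] at huniq
      have herase : ∑ j ∈ (cl i).erase i, η j i * L j = η 0 i := by
        rw [Finset.sum_congr rfl (fun j hj => ?_), Finset.sum_ite_eq' ((cl i).erase i) 0
          (fun _ => η 0 i), if_pos (Finset.mem_erase.mpr ⟨Ne.symm hi, h0mem i⟩)]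
        obtain ⟨hji, hjm⟩ := Finset.mem_erase.mp hj
        rw [hIH j hjm hji]
        by_cases hj0 : j = 0 <;> simp [hj0]
      rw [herase, hηself, one_mul] at huniq
      rw [if_neg hi]
      linarith
  refine ⟨?_, fun i hi => ?_⟩
  · have h := hL 0
    rw [key (cl 0).card 0 le_rfl, if_pos rfl] at h
    exact h
  · have h := hL i
    rw [key (cl i).card i le_rfl, if_neg hi] at h
    exact h
end
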